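/- Let S be a semicopula and b ∈ [0,1]. Suppose μ is a capacity and f a measurable function such that μ({f ≥ 0}) = 1, μ({f ≥ t}) = b for t ∈ (0, 1-a], and μ({f ≥ t}) = 0 for t ∈ (1-a, 1], where a ∈ [0,1). If I(μ, f+a) = I(μ,f) + a, then max(a, S(1,b)) = S(1-a, b) + a. -/

import Mathlib

open Set

structure IsSemicopula (S : ℝ → ℝ → ℝ) : Prop where
  mem : ∀ x ∈ Icc (0:ℝ) 1, ∀ y ∈ Icc (0:ℝ) 1, S x y ∈ Icc (0:ℝ) 1
  mono_left : ∀ y ∈ Icc (0:ℝ) 1, ∀ x₁ ∈ Icc (0:ℝ) 1, ∀ x₂ ∈ Icc (0:ℝ) 1,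
    x₁ ≤ x₂ → S x₁ y ≤ S x₂ y
  mono_right : ∀ x ∈ Icc (0:ℝ) 1, ∀ y₁ ∈ Icc (0:ℝ) 1, ∀ y₂ ∈ Icc (0:ℝ) 1,
    y₁ ≤ y₂ → S x y₁ ≤ S x y₂
  neutral_right : ∀ x ∈ Icc (0:ℝ) 1, S x 1 = x
  neutral_left : ∀ x ∈ Icc (0:ℝ) 1, S 1 x = x

structure IsCapacity {X : Type*} [MeasurableSpace X] (μ : Set X → ℝ) : Prop where
  mono : ∀ A B : Set X, A ⊆ B → μ A ≤ μ B
  empty : μ ∅ = 0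
  univ : μ Set.univ = 1
  mem : ∀ A : Set X, μ A ∈ Icc (0:ℝ) 1

/-- The smallest semicopula-based integral. -/
noncomputable def scInt {X : Type*} [MeasurableSpace X]
    (S : ℝ → ℝ → ℝ) (μ : Set X → ℝ) (f : X → ℝ) : ℝ :=
  ⨆ t : Icc (0:ℝ) 1, S t (μ {x | (t:ℝ) ≤ f x})

/-! Both integrals can be computed outright. For `f` the supremum over `t` is attained at
`t = 1 - a`, giving `S (1 - a) b`. For `f + a` the level sets are the whole space for `t ≤ a`
(contributing `S t 1 = t ≤ a`) and the level sets of `f` at `t - a` above, where the capacity is `b`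
(contributing at most `S 1 b`); hence `max a (S 1 b)`. -/

theorem IsSemicopula.apply_zero_right {S : ℝ → ℝ → ℝ} (hS : IsSemicopula S)
    {x : ℝ} (hx : x ∈ Icc (0:ℝ) 1) : S x 0 = 0 := by
  have h0 : (0:ℝ) ∈ Icc (0:ℝ) 1 := ⟨le_rfl, zero_le_one⟩
  have h1 : (1:ℝ) ∈ Icc (0:ℝ) 1 := ⟨zero_le_one, le_rfl⟩
  have hle : S x 0 ≤ S 1 0 := hS.mono_left 0 h0 x hx 1 h1 hx.2
  rw [hS.neutral_left 0 h0] at hle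
  exact le_antisymm hle (hS.mem x hx 0 h0).1

section scInt

variable {X : Type*} [MeasurableSpace X] {S : ℝ → ℝ → ℝ} {μ : Set X → ℝ} {f : X → ℝ}

theorem scInt_le {c : ℝ} (h : ∀ t ∈ Icc (0:ℝ) 1, S t (μ {x | t ≤ f x}) ≤ c) :
    scInt S μ f ≤ c :=
  have : Nonempty (Icc (0:ℝ) 1) := ⟨⟨0, le_rfl, zero_le_one⟩⟩
  ciSup_le fun t => h t t.2

theorem le_scInt (hS : IsSemicopula S) (hμ : IsCapacity μ) {t : ℝ} (ht : t ∈ Icc (0:ℝ) 1) :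
    S t (μ {x | t ≤ f x}) ≤ scInt S μ f := by
  have hbdd : BddAbove (range fun s : Icc (0:ℝ) 1 => S s (μ {x | (s:ℝ) ≤ f x})) := by
    refine ⟨1, ?_⟩
    rintro _ ⟨s, rfl⟩
    exact (hS.mem s s.2 _ (hμ.mem _)).2
  exact le_ciSup hbdd ⟨t, ht⟩

theorem scInt_eq_of_levels (hS : IsSemicopula S) (hμ : IsCapacity μ) {a b : ℝ}
    (hb : b ∈ Icc (0:ℝ) 1) (ha : a ∈ Ico (0:ℝ) 1)
    (h0 : μ {x | (0:ℝ) ≤ f x} = 1)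
    (h1 : ∀ t ∈ Ioc (0:ℝ) (1 - a), μ {x | t ≤ f x} = b)
    (h2 : ∀ t ∈ Ioc (1 - a) (1:ℝ), μ {x | t ≤ f x} = 0) :
    scInt S μ f = S (1 - a) b := by
  have h1a : 1 - a ∈ Icc (0:ℝ) 1 := ⟨by linarith [ha.2], by linarith [ha.1]⟩
  have hnonneg : 0 ≤ S (1 - a) b := (hS.mem _ h1a b hb).1
  refine le_antisymm (scInt_le fun t ht => ?_) ?_
  · rcases ht.1.eq_or_lt with rfl | ht0
    · rw [h0, hS.neutral_right 0 ⟨le_rfl, zero_le_one⟩]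
      exact hnonneg
    rcases le_or_gt t (1 - a) with hta | hta
    · rw [h1 t ⟨ht0, hta⟩]
      exact hS.mono_left b hb t ht _ h1a hta
    · rw [h2 t ⟨hta, ht.2⟩, hS.apply_zero_right ht]
      exact hnonneg
  · simpa only [h1 (1 - a) ⟨by linarith [ha.2], le_rfl⟩] using le_scInt (f := f) hS hμ h1a

theorem scInt_add_const_eq_of_levels (hS : IsSemicopula S) (hμ : IsCapacity μ) {a b : ℝ}
    (hb : b ∈ Icc (0:ℝ) 1) (ha : a ∈ Ico (0:ℝ) 1) (hf : ∀ x, 0 ≤ f x)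
    (h1 : ∀ t ∈ Ioc (0:ℝ) (1 - a), μ {x | t ≤ f x} = b) :
    scInt S μ (fun x => f x + a) = max a (S 1 b) := by
  have h1I : (1:ℝ) ∈ Icc (0:ℝ) 1 := ⟨zero_le_one, le_rfl⟩
  have hlow : ∀ {t}, t ≤ a → {x | t ≤ f x + a} = univ := fun hta =>
    eq_univ_of_forall fun x => by simp only [mem_ofPred_eq]; linarith [hf x]
  have hhigh : ∀ t, {x | t ≤ f x + a} = {x | t - a ≤ f x} := fun t => by
    simp only [sub_le_iff_le_add]
  refine le_antisymm (scInt_le fun t ht => ?_) (max_le ?_ ?_)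
  · rcases le_or_gt t a with hta | hta
    · rw [hlow hta, hμ.univ, hS.neutral_right t ht]
      exact le_max_of_le_left hta
    · rw [hhigh, h1 (t - a) ⟨by linarith, by linarith [ht.2]⟩]
      exact le_max_of_le_right (hS.mono_left b hb t ht 1 h1I ht.2)
  · have := le_scInt (f := fun x => f x + a) hS hμ ⟨ha.1, ha.2.le⟩
    rwa [hlow le_rfl, hμ.univ, hS.neutral_right a ⟨ha.1, ha.2.le⟩] at this
  · have := le_scInt (f := fun x => f x + a) hS hμ h1I
    rwa [hhigh, h1 (1 - a) ⟨by linarith [ha.2], le_rfl⟩] at this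

end scInt

theorem witness_gives_functional_eq_general {X : Type*} [MeasurableSpace X]
    (S : ℝ → ℝ → ℝ) (hS : IsSemicopula S) (b : ℝ) (hb : b ∈ Icc (0:ℝ) 1)
    (a : ℝ) (ha : a ∈ Ico (0:ℝ) 1)
    (μ : Set X → ℝ) (hμ : IsCapacity μ) (f : X → ℝ)
    (hf01 : ∀ x, f x ∈ Icc (0:ℝ) 1)
    (h0 : μ {x | (0:ℝ) ≤ f x} = 1)
    (h1 : ∀ t ∈ Ioc (0:ℝ) (1 - a), μ {x | t ≤ f x} = b)
    (h2 : ∀ t ∈ Ioc (1 - a) (1:ℝ), μ {x | t ≤ f x} = 0)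
    (heq : scInt S μ (fun x => f x + a) = scInt S μ f + a) :
    max a (S 1 b) = S (1 - a) b + a := by
  rwa [scInt_add_const_eq_of_levels hS hμ hb ha (fun x => (hf01 x).1) h1,
    scInt_eq_of_levels hS hμ hb ha h0 h1 h2] at heq

theorem witness_gives_functional_eq {X : Type*} [MeasurableSpace X]
    (S : ℝ → ℝ → ℝ) (hS : IsSemicopula S) (b : ℝ) (hb : b ∈ Icc (0:ℝ) 1)
    (a : ℝ) (ha : a ∈ Ico (0:ℝ) 1)
    (μ : Set X → ℝ) (hμ : IsCapacity μ) (f : X → ℝ) (hf : Measurable f)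
    (hf01 : ∀ x, f x ∈ Icc (0:ℝ) 1) (hfa : ∀ x, f x + a ≤ 1)
    (h0 : μ {x | (0:ℝ) ≤ f x} = 1)
    (h1 : ∀ t ∈ Ioc (0:ℝ) (1 - a), μ {x | t ≤ f x} = b)
    (h2 : ∀ t ∈ Ioc (1 - a) (1:ℝ), μ {x | t ≤ f x} = 0)
    (heq : scInt S μ (fun x => f x + a) = scInt S μ f + a) :
    max a (S 1 b) = S (1 - a) b + a :=
  witness_gives_functional_eq_general S hS b hb a ha μ hμ f hf01 h0 h1 h2 heq
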